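/- Let R be a PVMD, T a t-linked overring of R, and P a nonzero t-prime ideal of R. Then (PT)_{t₁} ≠ T if and only if T ⊆ R_P, where t₁ denotes the t-operation of the ring T. -/

import Mathlib

/-!
Common definitions: star operations (`v`- and `t`-closure), `t`-ideals, `t`-invertibility,
PVMDs, overrings, `t`-linked and `t`-flat overrings, localizations inside the quotient
field, Nagata and Kaplansky transforms, endomorphism rings of ideals.
-/

open scoped Classical

namespace PVMDPaper

noncomputable section

section Generic

variable (A : Type*) [CommRing A] (K : Type*) [Field K] [Algebra A K]

/-- The image of an integral ideal of `A` inside the field `K`, as an `A`-submodule of `K`. -/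
def toK (I : Ideal A) : Submodule A K := Submodule.map (Algebra.linearMap A K) I

variable {A K}

/-- The dual `I⁻¹ = (A : I) = {x ∈ K : x I ⊆ A}` of a submodule of `K`. -/
def dual (I : Submodule A K) : Submodule A K := 1 / I

/-- The `v`-closure `I_v = (I⁻¹)⁻¹`. -/
def vOp (I : Submodule A K) : Submodule A K := 1 / (1 / I)

/-- The `t`-closure `I_t`: the union of `J_v` where `J` ranges over the nonzero finitely
generated submodules `J ≤ I` (the union of this directed family is its supremum). -/
def tOp (I : Submodule A K) : Submodule A K :=
  sSup {V | ∃ J : Submodule A K, J ≠ ⊥ ∧ J.FG ∧ J ≤ I ∧ V = vOp J}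

variable (K)

/-- An (integral) ideal `I` of `A` is a `t`-ideal if `I = I_t`. -/
def IsTIdeal (I : Ideal A) : Prop := tOp (toK A K I) = toK A K I

/-- An ideal `I` is `t`-invertible if `(I I⁻¹)_t = A`. -/
def IsTInvertible (I : Ideal A) : Prop := tOp (toK A K I * dual (toK A K I)) = 1

/-- A `t`-maximal ideal: an ideal maximal in the set of proper integral `t`-ideals. -/
def IsTMaximal (M : Ideal A) : Prop :=
  M ≠ ⊤ ∧ IsTIdeal K M ∧ ∀ J : Ideal A, J ≠ ⊤ → IsTIdeal K J → M ≤ J → J = M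

variable (A)

/-- `A` is a Prüfer `v`-multiplication domain: every nonzero finitely generated ideal
is `t`-invertible. -/
def IsPVMD : Prop := ∀ I : Ideal A, I ≠ ⊥ → I.FG → IsTInvertible K I

/-- `Spec_t(A)` is Noetherian: the ascending chain condition on radical `t`-ideals. -/
def TSpecNoetherian : Prop :=
  ∀ f : ℕ →o Ideal A, (∀ n, IsTIdeal K (f n) ∧ (f n).radical = f n) →
    ∃ n, ∀ m, n ≤ m → f m = f n

variable {A K}

/-- A submodule of `K` is a subring of `K` iff it contains `1` and is closed under
multiplication (being an additive subgroup already). -/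
def IsSubringOf (S : Submodule A K) : Prop :=
  (1 : K) ∈ S ∧ ∀ x ∈ S, ∀ y ∈ S, x * y ∈ S

variable (K)

/-- The localization `A_P = {a/s : a ∈ A, s ∈ A ∖ P}` viewed as a subset of `K`. -/
def loc (P : Ideal A) : Set K :=
  {x | ∃ a s : A, s ∉ P ∧ x * algebraMap A K s = algebraMap A K a}

/-- The set `J A_P = {a/s : a ∈ J, s ∈ A ∖ P} ⊆ K`. -/
def locIdealAt (J P : Ideal A) : Set K :=
  {x | ∃ a ∈ J, ∃ s : A, s ∉ P ∧ x * algebraMap A K s = algebraMap A K a}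

/-- `Z(A, I)`: the set of zero divisors on `A/I`. -/
def ZSet (I : Ideal A) : Set A := {x | ∃ a : A, a ∉ I ∧ x * a ∈ I}

/-- `Q` is a maximal prime ideal of `Z(A,I)`: a prime contained in `Z(A,I)`, maximal
(under inclusion) among the primes contained in `Z(A,I)`. -/
def MaxPrimeOfZ (I Q : Ideal A) : Prop :=
  Q.IsPrime ∧ (Q : Set A) ⊆ ZSet I ∧
    ∀ Q' : Ideal A, Q'.IsPrime → (Q' : Set A) ⊆ ZSet I → Q ≤ Q' → Q' = Q

end Generic

section Overring

variable {R : Type*} [CommRing R] [IsDomain R]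
variable {K : Type*} [Field K] [Algebra R K] [IsFractionRing R K]

/-- The extension `IT` of an ideal `I` of `R` to an overring `T`, as a `T`-submodule of `K`. -/
def extendI (I : Ideal R) (T : Subalgebra R K) : Submodule T K :=
  Submodule.span T (algebraMap R K '' (I : Set R))

/-- The extension `IT` of an `R`-submodule `I` of `K` to an overring `T`. -/
def extendS (I : Submodule R K) (T : Subalgebra R K) : Submodule T K :=
  Submodule.span T (I : Set K)

/-- An overring `T` of `R` is `t`-linked over `R` if `(IT)⁻¹ = T` for each finitely
generated ideal `I` of `R` with `I⁻¹ = R`. -/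
def IsTLinked (T : Subalgebra R K) : Prop :=
  ∀ I : Ideal R, I.FG → dual (toK R K I) = 1 → dual (extendI I T) = 1

/-- An overring `T` of `R` is `t`-flat over `R` if `T_M = R_{M ∩ R}` for each
`t`-maximal ideal `M` of `T`. -/
def IsTFlat (T : Subalgebra R K) : Prop :=
  ∀ M : Ideal T, IsTMaximal K M → loc K M = loc K (M.comap (algebraMap R T))

variable (R K)

/-- `R` is a `tQR`-domain: a PVMD all of whose `t`-linked overrings are localizations
of `R` at multiplicative sets. -/
def IsTQR : Prop :=
  IsPVMD R K ∧ ∀ T : Subalgebra R K, IsTLinked T → ∃ S : Submonoid R,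
    (T : Set K) = {x | ∃ a : R, ∃ s ∈ S, x * algebraMap R K s = algebraMap R K a}

variable {R K}
variable (K)

/-- The endomorphism ring `(I : I) = {x ∈ K : x I ⊆ I}` of an ideal `I`, as an
overring of `R`. -/
def endoRing (I : Ideal R) : Subalgebra R K where
  carrier := {x : K | ∀ y ∈ toK R K I, x * y ∈ toK R K I}
  mul_mem' := by
    intro a b ha hb y hy
    rw [mul_assoc]
    exact ha _ (hb _ hy)
  one_mem' := by
    intro y hy
    rwa [one_mul]
  add_mem' := by
    intro a b ha hb y hy
    rw [add_mul]
    exact Submodule.add_mem _ (ha y hy) (hb y hy)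
  zero_mem' := by
    intro y hy
    rw [zero_mul]
    exact Submodule.zero_mem _
  algebraMap_mem' := by
    intro r y hy
    rw [← Algebra.smul_def]
    exact Submodule.smul_mem _ r hy

set_option synthInstance.maxHeartbeats 400000 in
/-- The ideal `I`, viewed as an ideal of its endomorphism ring `(I : I)`. -/
def idealInEndo (I : Ideal R) : Ideal (endoRing K I) where
  carrier := {x | (x : K) ∈ toK R K I}
  add_mem' := by
    intro a b ha hb
    simp only [Set.mem_setOf_eq] at *
    rw [AddMemClass.coe_add]
    exact Submodule.add_mem _ ha hb
  zero_mem' := by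
    simp only [Set.mem_setOf_eq, ZeroMemClass.coe_zero]
    exact Submodule.zero_mem _
  smul_mem' := by
    intro c x hx
    simp only [Set.mem_setOf_eq] at *
    rw [smul_eq_mul, MulMemClass.coe_mul]
    exact c.2 _ hx

/-- The Kaplansky transform `Ω(I) = {u ∈ K : ∀ a ∈ I, ∃ n ≥ 1, u aⁿ ∈ R}`, as an
overring of `R`. -/
def kaplansky (I : Ideal R) : Subalgebra R K where
  carrier := {u : K | ∀ a ∈ I, ∃ n : ℕ, 0 < n ∧
    ∃ r : R, u * (algebraMap R K a) ^ n = algebraMap R K r}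
  mul_mem' := by
    intro u v hu hv a ha
    obtain ⟨n, hn, r, hr⟩ := hu a ha
    obtain ⟨m, hm, s, hs⟩ := hv a ha
    refine ⟨n + m, by omega, r * s, ?_⟩
    rw [map_mul, ← hr, ← hs, pow_add]
    ring
  one_mem' := by
    intro a ha
    exact ⟨1, one_pos, a, by rw [pow_one, one_mul]⟩
  add_mem' := by
    intro u v hu hv a ha
    obtain ⟨n, hn, r, hr⟩ := hu a ha
    obtain ⟨m, hm, s, hs⟩ := hv a ha
    refine ⟨n + m, by omega, r * a ^ m + s * a ^ n, ?_⟩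
    rw [map_add, map_mul, map_mul, map_pow, map_pow, ← hr, ← hs, pow_add, add_mul]
    ring
  zero_mem' := by
    intro a ha
    exact ⟨1, one_pos, 0, by rw [map_zero, zero_mul]⟩
  algebraMap_mem' := by
    intro r a ha
    exact ⟨1, one_pos, r * a, by rw [map_mul, pow_one]⟩

/-- The Nagata (ideal) transform `T(I) = ⋃_{n ≥ 1} (R : Iⁿ)`, as an overring of `R`. -/
def nagata (I : Ideal R) : Subalgebra R K where
  carrier := {x : K | ∃ n : ℕ, ∀ y ∈ I ^ (n + 1),
    ∃ r : R, x * algebraMap R K y = algebraMap R K r}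
  mul_mem' := by
    intro x x' hx hx'
    obtain ⟨n, hn⟩ := hx
    obtain ⟨m, hm⟩ := hx'
    refine ⟨n + m + 1, fun y hy => ?_⟩
    rw [show n + m + 1 + 1 = (n + 1) + (m + 1) by omega, pow_add] at hy
    refine Submodule.mul_induction_on hy ?_ ?_
    · intro a ha b hb
      obtain ⟨r, hr⟩ := hn a ha
      obtain ⟨s, hs⟩ := hm b hb
      refine ⟨r * s, ?_⟩
      rw [map_mul, map_mul, ← hr, ← hs]
      ring
    · rintro y1 y2 ⟨r1, h1⟩ ⟨r2, h2⟩
      exact ⟨r1 + r2, by rw [map_add, map_add, mul_add, h1, h2]⟩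
  one_mem' := ⟨0, fun y _ => ⟨y, by rw [one_mul]⟩⟩
  add_mem' := by
    intro x x' hx hx'
    obtain ⟨n, hn⟩ := hx
    obtain ⟨m, hm⟩ := hx'
    refine ⟨n + m + 1, fun y hy => ?_⟩
    have h1 : y ∈ I ^ (n + 1) := Ideal.pow_le_pow_right (by omega) hy
    have h2 : y ∈ I ^ (m + 1) := Ideal.pow_le_pow_right (by omega) hy
    obtain ⟨r, hr⟩ := hn y h1
    obtain ⟨s, hs⟩ := hm y h2
    exact ⟨r + s, by rw [map_add, add_mul, hr, hs]⟩
  zero_mem' := ⟨0, fun y _ => ⟨0, by rw [map_zero, zero_mul]⟩⟩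
  algebraMap_mem' := by
    intro r
    exact ⟨0, fun y _ => ⟨r * y, by rw [map_mul]⟩⟩

end Overring

/-!
For `I = (a, b)` in a PVMD, `(I I⁻¹)_t = R` yields a finitely generated `J ⊆ I I⁻¹` with
`J⁻¹ = R`, and `I I⁻¹` is generated by elements `c, d ∈ R` with `c a = d b`.

If `t = a / b ∈ T` is not in `R_P`, then `c a = d b` means `t c = d` with `c ∈ P`, so
`J ⊆ PT`; `t`-linkedness gives `(JT)⁻¹ = T`, hence `1 ∈ (JT)_v ⊆ (PT)_{t₁}`.

Such a `J` never lies in a proper `t`-ideal `P`, as `1 ∈ J_v ⊆ P_t = P`. Since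
`I I⁻¹ ⊆ (b : a) + (a : b)`, some element of `(b : a)` or `(a : b)` avoids `P`, i.e. `a / b` or
`b / a` lies in `R_P`: for a `t`-prime `P`, `R_P` is a valuation ring.

If `T ⊆ R_P` and `1 ∈ J_v` for a finitely generated `J ⊆ PT`, let `z` be a generator of `J` of
largest value and `σ ∉ P` a common denominator of the `x / z`: then `σ / z ∈ J⁻¹ ⊆ T`, so
`σ = (σ / z) z ∈ PT ∩ R ⊆ P`, a contradiction.
-/

section TClosure

variable {A : Type*} [CommRing A] {K : Type*} [Field K] [Algebra A K]

lemma mem_div_span_iff {I : Submodule A K} {s : Set K} {u : K} :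
    u ∈ I / Submodule.span A s ↔ ∀ x ∈ s, u * x ∈ I :=
  ⟨fun h x hx => h x (Submodule.subset_span hx),
    fun h _ hy => (Submodule.span_le (p := I.comap (LinearMap.mulLeft A u))).2 h hy⟩

lemma vOp_mono {J J' : Submodule A K} (h : J ≤ J') : vOp J ≤ vOp J' :=
  fun _ hx y hy => hx y fun _ hz => hy _ (h hz)

lemma vOp_le_one {J : Submodule A K} (h : J ≤ 1) : vOp J ≤ 1 :=
  fun x hx => by simpa using hx 1 (Submodule.one_mem_div.2 h)

lemma vOp_le_tOp {J X : Submodule A K} (hJ0 : J ≠ ⊥) (hJ : J.FG) (hJX : J ≤ X) :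
    vOp J ≤ tOp X :=
  le_sSup ⟨J, hJ0, hJ, hJX, rfl⟩

lemma tOp_le_one {X : Submodule A K} (hX : X ≤ 1) : tOp X ≤ 1 :=
  sSup_le <| by
    rintro _ ⟨J, -, -, hJX, rfl⟩
    exact vOp_le_one (hJX.trans hX)

lemma tOp_eq_one_iff {X : Submodule A K} (hX : X ≤ 1) : tOp X = 1 ↔ (1 : K) ∈ tOp X :=
  ⟨fun h => h ▸ Submodule.one_le.1 le_rfl,
    fun h => le_antisymm (tOp_le_one hX) (Submodule.one_le.2 h)⟩

lemma exists_of_mem_tOp {X : Submodule A K} {x : K} (hx0 : x ≠ 0) (hx : x ∈ tOp X) :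
    ∃ J : Submodule A K, J ≠ ⊥ ∧ J.FG ∧ J ≤ X ∧ x ∈ vOp J := by
  set S := {V | ∃ J : Submodule A K, J ≠ ⊥ ∧ J.FG ∧ J ≤ X ∧ V = vOp J}
  change x ∈ sSup S at hx
  rcases S.eq_empty_or_nonempty with hS | hS
  · rw [hS, sSup_empty, Submodule.mem_bot] at hx
    exact absurd hx hx0
  have hdir : DirectedOn (· ≤ ·) S := by
    rintro _ ⟨J₁, hJ₁0, hJ₁, hJ₁X, rfl⟩ _ ⟨J₂, -, hJ₂, hJ₂X, rfl⟩
    refine ⟨vOp (J₁ ⊔ J₂), ⟨J₁ ⊔ J₂, ?_, hJ₁.sup hJ₂, sup_le hJ₁X hJ₂X, rfl⟩,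
      vOp_mono le_sup_left, vOp_mono le_sup_right⟩
    exact fun h => hJ₁0 (le_bot_iff.1 (h ▸ le_sup_left))
  obtain ⟨_, ⟨J, hJ0, hJ, hJX, rfl⟩, hxJ⟩ := (Submodule.mem_sSup_of_directed hS hdir).1 hx
  exact ⟨J, hJ0, hJ, hJX, hxJ⟩

end TClosure

lemma ValuationSubring.exists_forall_div_mem {K : Type*} [Field K] (A : ValuationSubring K)
    {s : Finset K} (hs : ∃ x ∈ s, x ≠ 0) : ∃ z ∈ s, z ≠ 0 ∧ ∀ x ∈ s, x / z ∈ A := by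
  obtain ⟨x₀, hx₀, hx₀0⟩ := hs
  obtain ⟨z, hz, hmax⟩ := s.exists_max_image A.valuation ⟨x₀, hx₀⟩
  have hz0 : z ≠ 0 := by
    rintro rfl
    exact hx₀0 (A.valuation.zero_iff.1 (le_antisymm (map_zero A.valuation ▸ hmax x₀ hx₀) zero_le))
  refine ⟨z, hz, hz0, fun x hx => ?_⟩
  obtain ⟨a, rfl⟩ := (A.valuation_le_iff x z).1 (hmax x hx)
  rw [mul_div_cancel_right₀ _ hz0]
  exact a.2

section Localization

variable {A : Type*} [CommRing A] (K : Type*) [Field K] [Algebra A K] {P : Ideal A}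

def locSubring (hP : P.IsPrime) : Subring K where
  carrier := loc K P
  mul_mem' := by
    rintro x y ⟨a, s, hs, hx⟩ ⟨b, t, ht, hy⟩
    exact ⟨a * b, s * t, hP.mul_notMem hs ht, by rw [map_mul, map_mul, ← hx, ← hy]; ring⟩
  one_mem' := ⟨1, 1, hP.one_notMem, one_mul _⟩
  add_mem' := by
    rintro x y ⟨a, s, hs, hx⟩ ⟨b, t, ht, hy⟩
    refine ⟨a * t + b * s, s * t, hP.mul_notMem hs ht, ?_⟩
    rw [map_add, map_mul, map_mul, map_mul, ← hx, ← hy]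
    ring
  zero_mem' := ⟨0, 1, hP.one_notMem, by rw [zero_mul, map_zero]⟩
  neg_mem' := by
    rintro x ⟨a, s, hs, hx⟩
    exact ⟨-a, s, hs, by rw [map_neg, ← hx, neg_mul]⟩

variable {K}

lemma exists_mul_eq_algebraMap_of_subset_loc (hP : P.IsPrime) (s : Finset K)
    (hs : (s : Set K) ⊆ loc K P) :
    ∃ σ ∉ P, ∀ x ∈ s, ∃ r : A, x * algebraMap A K σ = algebraMap A K r := by
  induction s using Finset.induction_on with
  | empty => exact ⟨1, hP.one_notMem, by simp⟩
  | insert y s _ ih =>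
    rw [Finset.coe_insert, Set.insert_subset_iff] at hs
    obtain ⟨a, τ, hτ, hy⟩ := hs.1
    obtain ⟨σ, hσ, hσs⟩ := ih hs.2
    refine ⟨σ * τ, hP.mul_notMem hσ hτ, ?_⟩
    simp only [Finset.mem_insert, forall_eq_or_imp]
    refine ⟨⟨σ * a, by rw [map_mul, map_mul, ← hy]; ring⟩, fun x hx => ?_⟩
    obtain ⟨r, hr⟩ := hσs x hx
    exact ⟨r * τ, by rw [map_mul, map_mul, ← hr]; ring⟩

lemma algebraMap_mem_locIdealAt (hP : P.IsPrime) {J : Ideal A} {a : A} (ha : a ∈ J) :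
    algebraMap A K a ∈ locIdealAt K J P :=
  ⟨a, ha, 1, hP.one_notMem, by rw [map_one, mul_one]⟩

lemma add_mem_locIdealAt (hP : P.IsPrime) {J : Ideal A} {x y : K}
    (hx : x ∈ locIdealAt K J P) (hy : y ∈ locIdealAt K J P) : x + y ∈ locIdealAt K J P := by
  obtain ⟨a, ha, s, hs, hx⟩ := hx
  obtain ⟨b, hb, t, ht, hy⟩ := hy
  refine ⟨a * t + b * s, J.add_mem (J.mul_mem_right t ha) (J.mul_mem_right s hb), s * t,
    hP.mul_notMem hs ht, ?_⟩
  rw [map_add, map_mul, map_mul, map_mul, ← hx, ← hy]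
  ring

lemma mul_mem_locIdealAt (hP : P.IsPrime) {J : Ideal A} {x y : K}
    (hx : x ∈ loc K P) (hy : y ∈ locIdealAt K J P) : x * y ∈ locIdealAt K J P := by
  obtain ⟨a, s, hs, hx⟩ := hx
  obtain ⟨b, hb, t, ht, hy⟩ := hy
  exact ⟨a * b, J.mul_mem_left a hb, s * t, hP.mul_notMem hs ht,
    by rw [map_mul, map_mul, ← hx, ← hy]; ring⟩

end Localization

section Extension

variable {R : Type*} [CommRing R] {K : Type*} [Field K] [Algebra R K] {T : Subalgebra R K}

lemma extendI_le_one (I : Ideal R) : extendI I T ≤ 1 :=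
  Submodule.span_le.2 <| by
    rintro _ ⟨p, -, rfl⟩
    exact Submodule.mem_one.2 ⟨algebraMap R T p, rfl⟩

lemma extendI_fg {I : Ideal R} (hI : I.FG) : (extendI I T).FG := by
  obtain ⟨s, rfl⟩ := hI
  have hspan : extendI (Ideal.span (s : Set R)) T = Submodule.span T (algebraMap R K '' s) := by
    have h := congrArg (fun N : Submodule R K => Submodule.span T (N : Set K))
      (Submodule.map_span (Algebra.linearMap R K) (s : Set R))
    simp only [Submodule.map_coe, Submodule.span_span_of_tower] at h
    exact h
  exact hspan ▸ Submodule.fg_span (s.finite_toSet.image _)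

lemma extendI_subset_locIdealAt {P : Ideal R} (hP : P.IsPrime) (hTP : (T : Set K) ⊆ loc K P)
    (J : Ideal R) : (extendI J T : Set K) ⊆ locIdealAt K J P := by
  intro x hx
  induction hx using Submodule.span_induction with
  | mem _ h =>
    obtain ⟨a, ha, rfl⟩ := h
    exact algebraMap_mem_locIdealAt hP ha
  | zero => simpa using algebraMap_mem_locIdealAt (K := K) hP J.zero_mem
  | add _ _ _ _ hx hy => exact add_mem_locIdealAt hP hx hy
  | smul t _ _ hy => exact mul_mem_locIdealAt hP (hTP t.2) hy

end Extension

section FractionRing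

variable {R : Type*} [CommRing R]
variable {K : Type*} [Field K] [Algebra R K] [IsFractionRing R K]

lemma algebraMap_mem_toK_iff {I : Ideal R} {r : R} :
    algebraMap R K r ∈ toK R K I ↔ r ∈ I :=
  ⟨fun ⟨_, hp, he⟩ => IsFractionRing.injective R K he ▸ hp, Submodule.mem_map_of_mem⟩

lemma toK_ne_bot {I : Ideal R} (hI : I ≠ ⊥) : toK R K I ≠ ⊥ := fun h =>
  hI (Submodule.map_injective_of_injective (IsFractionRing.injective R K)
    (h.trans (Submodule.map_bot _).symm))

lemma mem_of_algebraMap_mem_locIdealAt {P : Ideal R} (hP : P.IsPrime) {r : R}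
    (hr : algebraMap R K r ∈ locIdealAt K P P) : r ∈ P := by
  obtain ⟨p, hp, s, hs, h⟩ := hr
  have hrs : r * s = p := IsFractionRing.injective R K (by rw [map_mul, h])
  exact (hP.mem_or_mem (hrs ▸ hp)).resolve_right hs

lemma exists_ideal_of_one_mem_tOp {X : Submodule R K} (hX : X ≤ 1) (h1 : (1 : K) ∈ tOp X) :
    ∃ J : Ideal R, J ≠ ⊥ ∧ J.FG ∧ dual (toK R K J) = 1 ∧ toK R K J ≤ X := by
  obtain ⟨J₀, hJ₀0, hJ₀, hJ₀X, h1J₀⟩ := exists_of_mem_tOp one_ne_zero h1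
  have hJ₀1 : J₀ ≤ 1 := hJ₀X.trans hX
  have hmap : toK R K (J₀.comap (Algebra.linearMap R K)) = J₀ :=
    Submodule.map_comap_eq_self (Submodule.one_eq_range (R := R) (A := K) ▸ hJ₀1)
  refine ⟨J₀.comap (Algebra.linearMap R K), fun h => hJ₀0 ?_, ?_, ?_, hmap.le.trans hJ₀X⟩
  · rw [← hmap, h, toK, Submodule.map_bot]
  · exact Submodule.fg_of_fg_map_injective _ (IsFractionRing.injective R K) (hmap ▸ hJ₀)
  · rw [hmap]
    exact le_antisymm (Submodule.one_mem_div.1 h1J₀) (Submodule.one_le_one_div.2 hJ₀1)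

lemma toK_span_pair_mul_dual_le {a b : R} {E : Ideal R}
    (hE : ∀ c d : R, c * a = d * b → c ∈ E ∧ d ∈ E) :
    toK R K (Ideal.span {a, b}) * dual (toK R K (Ideal.span {a, b})) ≤ toK R K E := by
  have hspan : toK R K (Ideal.span {a, b}) =
      Submodule.span R {algebraMap R K a, algebraMap R K b} := by
    rw [toK, Ideal.span, Submodule.map_span, Set.image_pair]
    rfl
  rw [Submodule.mul_le]
  intro x hx y hy
  obtain ⟨d, hd⟩ := Submodule.mem_one.1
    (hy _ (algebraMap_mem_toK_iff.2 (Ideal.subset_span (Set.mem_insert a {b}))))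
  obtain ⟨c, hc⟩ := Submodule.mem_one.1
    (hy _ (algebraMap_mem_toK_iff.2 (Ideal.subset_span (Set.mem_insert_of_mem a rfl))))
  have hcd : c * a = d * b := IsFractionRing.injective R K <| by
    rw [map_mul, map_mul, hc, hd]
    ring
  obtain ⟨r, s, rfl⟩ := Submodule.mem_span_pair.1 (hspan ▸ hx)
  rw [add_mul, smul_mul_assoc, smul_mul_assoc, mul_comm _ y, mul_comm _ y, ← hd, ← hc]
  exact add_mem (Submodule.smul_mem _ r (algebraMap_mem_toK_iff.2 (hE c d hcd).2))
    (Submodule.smul_mem _ s (algebraMap_mem_toK_iff.2 (hE c d hcd).1))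

lemma IsPVMD.exists_fg_dual_eq_one_le (hR : IsPVMD R K) {a b : R} (hb : b ≠ 0) {E : Ideal R}
    (hE : ∀ c d : R, c * a = d * b → c ∈ E ∧ d ∈ E) :
    ∃ J : Ideal R, J ≠ ⊥ ∧ J.FG ∧ dual (toK R K J) = 1 ∧ J ≤ E := by
  set I := Ideal.span ({a, b} : Set R)
  have hI0 : I ≠ ⊥ := fun h =>
    hb ((Submodule.mem_bot R).1 (h ▸ Ideal.subset_span (Set.mem_insert_of_mem a rfl)))
  have hI : I.FG := ⟨{a, b}, by simp [I]⟩
  have hII : toK R K I * dual (toK R K I) ≤ 1 := Submodule.mul_one_div_le_one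
  obtain ⟨J, hJ0, hJ, hdual, hJI⟩ :=
    exists_ideal_of_one_mem_tOp hII ((tOp_eq_one_iff hII).1 (hR I hI0 hI))
  exact ⟨J, hJ0, hJ, hdual, (Submodule.map_le_map_iff_of_injective
    (IsFractionRing.injective R K) J E).1 (hJI.trans (toK_span_pair_mul_dual_le hE))⟩

lemma IsTIdeal.not_le_of_dual_eq_one {P : Ideal R} (htP : IsTIdeal K P) (hP : P ≠ ⊤)
    {J : Ideal R} (hJ0 : J ≠ ⊥) (hJ : J.FG) (hdual : dual (toK R K J) = 1) : ¬ J ≤ P := by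
  intro hJP
  have h1 : (1 : K) ∈ tOp (toK R K P) :=
    vOp_le_tOp (toK_ne_bot hJ0) (Submodule.FG.map _ hJ) (Submodule.map_mono hJP)
      (Submodule.one_mem_div.2 hdual.le)
  rw [htP, ← map_one (algebraMap R K), algebraMap_mem_toK_iff] at h1
  exact hP ((Ideal.eq_top_iff_one P).2 h1)

lemma IsPVMD.exists_notMem_and_dvd_or_dvd (hR : IsPVMD R K) {P : Ideal R} (hP : P.IsPrime)
    (htP : IsTIdeal K P) (a : R) {b : R} (hb : b ≠ 0) : ∃ s ∉ P, a ∣ s * b ∨ b ∣ s * a := by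
  set E := (Ideal.span {b}).colon (Ideal.span {a}) ⊔ (Ideal.span {a}).colon (Ideal.span {b})
  have hE : ∀ c d : R, c * a = d * b → c ∈ E ∧ d ∈ E := fun c d hcd =>
    ⟨Submodule.mem_sup_left (Submodule.mem_colon_span_singleton.2
      (Ideal.mem_span_singleton.2 ⟨d, by rw [smul_eq_mul, hcd, mul_comm]⟩)),
    Submodule.mem_sup_right (Submodule.mem_colon_span_singleton.2
      (Ideal.mem_span_singleton.2 ⟨c, by rw [smul_eq_mul, ← hcd, mul_comm]⟩))⟩
  obtain ⟨J, hJ0, hJ, hdual, hJE⟩ := hR.exists_fg_dual_eq_one_le hb hE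
  obtain ⟨e, heE, heP⟩ := SetLike.not_le_iff_exists.1 fun hEP =>
    htP.not_le_of_dual_eq_one hP.ne_top hJ0 hJ hdual (hJE.trans hEP)
  obtain ⟨e₁, he₁, e₂, he₂, rfl⟩ := Submodule.mem_sup.1 heE
  by_cases h₁ : e₁ ∈ P
  · exact ⟨e₂, fun h₂ => heP (P.add_mem h₁ h₂),
      Or.inl (Ideal.mem_span_singleton.1 (Submodule.mem_colon_span_singleton.1 he₂))⟩
  · exact ⟨e₁, h₁,
      Or.inr (Ideal.mem_span_singleton.1 (Submodule.mem_colon_span_singleton.1 he₁))⟩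

lemma IsPVMD.mem_loc_or_inv_mem_loc [Nontrivial R] (hR : IsPVMD R K) {P : Ideal R}
    (hP : P.IsPrime) (htP : IsTIdeal K P) (w : K) : w ∈ loc K P ∨ w⁻¹ ∈ loc K P := by
  rcases eq_or_ne w 0 with rfl | hw
  · exact Or.inl (locSubring K hP).zero_mem
  obtain ⟨⟨a, b⟩, hab⟩ := IsLocalization.surj (nonZeroDivisors R) w
  have hb : algebraMap R K b ≠ 0 :=
    IsFractionRing.to_map_ne_zero_of_mem_nonZeroDivisors b.2
  obtain ⟨s, hs, ⟨u, hu⟩ | ⟨u, hu⟩⟩ :=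
    hR.exists_notMem_and_dvd_or_dvd hP htP a (nonZeroDivisors.ne_zero b.2)
  · refine Or.inr ⟨u, s, hs, ?_⟩
    have hu' := congrArg (algebraMap R K) hu
    simp only [map_mul] at hu'
    rw [inv_mul_eq_iff_eq_mul₀ hw]
    exact mul_right_cancel₀ hb (by linear_combination hu' - algebraMap R K u * hab)
  · refine Or.inl ⟨u, s, hs, ?_⟩
    have hu' := congrArg (algebraMap R K) hu
    simp only [map_mul] at hu'
    exact mul_right_cancel₀ hb (by linear_combination algebraMap R K s * hab + hu')

def locValuationSubring [Nontrivial R] (hR : IsPVMD R K) {P : Ideal R} (hP : P.IsPrime)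
    (htP : IsTIdeal K P) : ValuationSubring K :=
  ValuationSubring.ofSubring (locSubring K hP) (hR.mem_loc_or_inv_mem_loc hP htP)

variable {T : Subalgebra R K}

lemma extendI_ne_bot {I : Ideal R} (hI : I ≠ ⊥) : extendI I T ≠ ⊥ := by
  obtain ⟨r, hr, hr0⟩ := Submodule.exists_mem_ne_zero_of_ne_bot hI
  exact (Submodule.ne_bot_iff _).2 ⟨_, Submodule.subset_span ⟨r, hr, rfl⟩,
    (map_ne_zero_iff _ (IsFractionRing.injective R K)).2 hr0⟩

lemma one_mem_tOp_extendI_of_not_subset_loc [Nontrivial R] (hR : IsPVMD R K)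
    (hT : IsTLinked T) {P : Ideal R} (hTP : ¬ (T : Set K) ⊆ loc K P) :
    (1 : K) ∈ tOp (extendI P T) := by
  obtain ⟨t, htT, htP⟩ := Set.not_subset.1 hTP
  obtain ⟨⟨a, b⟩, hab⟩ := IsLocalization.surj (nonZeroDivisors R) t
  have hb : algebraMap R K b ≠ 0 :=
    IsFractionRing.to_map_ne_zero_of_mem_nonZeroDivisors b.2
  set E : Ideal R := ((extendI P T).restrictScalars R).comap (Algebra.linearMap R K)
  have hE : ∀ c d : R, c * a = d * b → c ∈ E ∧ d ∈ E := by
    intro c d hcd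
    have hcd' := congrArg (algebraMap R K) hcd
    simp only [map_mul] at hcd'
    have htc : t * algebraMap R K c = algebraMap R K d :=
      mul_right_cancel₀ hb (by linear_combination algebraMap R K c * hab + hcd')
    have hcP : c ∈ P := by
      by_contra hc
      exact htP ⟨d, c, hc, htc⟩
    have hcE : algebraMap R K c ∈ extendI P T := Submodule.subset_span ⟨c, hcP, rfl⟩
    refine ⟨hcE, ?_⟩
    change algebraMap R K d ∈ extendI P T
    rw [← htc]
    exact (extendI P T).smul_mem ⟨t, htT⟩ hcE
  obtain ⟨J, hJ0, hJ, hdual, hJE⟩ :=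
    hR.exists_fg_dual_eq_one_le (nonZeroDivisors.ne_zero b.2) hE
  have hJP : extendI J T ≤ extendI P T := Submodule.span_le.2 <| by
    rintro _ ⟨c, hc, rfl⟩
    exact hJE hc
  exact vOp_le_tOp (extendI_ne_bot hJ0) (extendI_fg hJ) hJP
    (Submodule.one_mem_div.2 (hT J hJ hdual).le)

lemma one_notMem_tOp_extendI_of_subset_loc [Nontrivial R] (hR : IsPVMD R K) {P : Ideal R}
    (hP : P.IsPrime) (htP : IsTIdeal K P) (hTP : (T : Set K) ⊆ loc K P) :
    (1 : K) ∉ tOp (extendI P T) := by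
  intro h1
  obtain ⟨J, hJ0, ⟨s, rfl⟩, hJP, h1J⟩ := exists_of_mem_tOp one_ne_zero h1
  have hs : ∃ x ∈ s, x ≠ 0 := by
    by_contra! h
    exact hJ0 (Submodule.span_eq_bot.2 h)
  obtain ⟨z, hzs, hz0, hdiv⟩ :=
    ValuationSubring.exists_forall_div_mem (locValuationSubring hR hP htP) hs
  obtain ⟨σ, hσ, hσs⟩ := exists_mul_eq_algebraMap_of_subset_loc hP (s.image (· / z))
    (by rw [Finset.coe_image, Set.image_subset_iff]; exact hdiv)
  have hσz : algebraMap R K σ / z ∈ (1 : Submodule T K) / Submodule.span T s := by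
    refine mem_div_span_iff.2 fun x hx => ?_
    obtain ⟨r, hr⟩ := hσs (x / z) (Finset.mem_image_of_mem _ hx)
    rw [div_mul_eq_mul_div, mul_div_assoc, mul_comm, hr]
    exact Submodule.mem_one.2 ⟨algebraMap R T r, rfl⟩
  obtain ⟨u, hu⟩ := Submodule.mem_one.1 (Submodule.one_mem_div.1 h1J hσz)
  have hσP : algebraMap R K σ ∈ extendI P T := by
    have := (extendI P T).smul_mem u (hJP (Submodule.subset_span hzs))
    rwa [Algebra.smul_def, hu, div_mul_cancel₀ _ hz0] at this
  exact hσ (mem_of_algebraMap_mem_locIdealAt hP (extendI_subset_locIdealAt hP hTP P hσP))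

end FractionRing

section Statements

variable {R : Type*} [CommRing R] [IsDomain R]
variable {K : Type*} [Field K] [Algebra R K] [IsFractionRing R K]

theorem statement_5_general (hR : IsPVMD R K) (T : Subalgebra R K) (hT : IsTLinked T)
    (P : Ideal R) (hP : P.IsPrime) (htP : IsTIdeal K P) :
    tOp (extendI P T) ≠ 1 ↔ (T : Set K) ⊆ loc K P := by
  rw [Ne, tOp_eq_one_iff (extendI_le_one P)]
  exact ⟨not_imp_comm.1 (one_mem_tOp_extendI_of_not_subset_loc hR hT),
    one_notMem_tOp_extendI_of_subset_loc hR hP htP⟩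

/-- Let `R` be a PVMD, `T` a `t`-linked overring of `R`, and `P` a
nonzero `t`-prime ideal of `R`. Then `(PT)_{t₁} ≠ T` iff `T ⊆ R_P`. -/
theorem statement_5 (hR : IsPVMD R K) (T : Subalgebra R K) (hT : IsTLinked T)
    (P : Ideal R) (hbot : P ≠ ⊥) (hP : P.IsPrime) (htP : IsTIdeal K P) :
    tOp (extendI P T) ≠ 1 ↔ (T : Set K) ⊆ loc K P :=
  statement_5_general hR T hT P hP htP

end Statements

end

end PVMDPaper
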